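/- arXiv:1106.2563 — 2 statements merged into one kernel-verified Lean document; each statement's English description precedes it below -/
import Mathlib

section
/- The Runge–Lenz vector of the Kepler problem admits a potential representation: for F(x,y) = (1/2)(‖x‖²‖y‖² − ⟨x,y⟩² + 2μ‖x‖) one has, for each j ∈ {1,2,3} and x ≠ 0, ∂F/∂x_j = (y × (x × y) + μ x/‖x‖)_j. -/
/-- Cross product, Euclidean inner product and norm on ℝ³. -/
def cross (x y : Fin 3 → ℝ) : Fin 3 → ℝ :=
  ![x 1 * y 2 - x 2 * y 1, x 2 * y 0 - x 0 * y 2, x 0 * y 1 - x 1 * y 0]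

def dot (x y : Fin 3 → ℝ) : ℝ := ∑ j, x j * y j

noncomputable def enorm3 (x : Fin 3 → ℝ) : ℝ := Real.sqrt (dot x x)

set_option maxHeartbeats 1000000 in
theorem runge_lenz_potential_representation
    (μ : ℝ)
    (F : (Fin 3 → ℝ) → (Fin 3 → ℝ) → ℝ)
    (hF : F = fun x y =>
      (1 / 2) * (enorm3 x ^ 2 * enorm3 y ^ 2 - dot x y ^ 2 + 2 * μ * enorm3 x)) :
    ∀ (x y : Fin 3 → ℝ), x ≠ 0 → ∀ j : Fin 3,
      fderiv ℝ (fun x' => F x' y) x (Pi.single j 1)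
        = (cross y (cross x y) + (μ / enorm3 x) • x) j := by
  intro x y hx j
  have hqpos : 0 < x 0 * x 0 + x 1 * x 1 + x 2 * x 2 := by
    rcases Function.ne_iff.mp hx with ⟨i, hip⟩
    have h0 := mul_self_nonneg (x 0)
    have h1 := mul_self_nonneg (x 1)
    have h2 := mul_self_nonneg (x 2)
    fin_cases i <;> simp at hip <;> nlinarith [mul_self_pos.mpr hip]
  have hqne : x 0 * x 0 + x 1 * x 1 + x 2 * x 2 ≠ 0 := ne_of_gt hqpos
  have hfun : (fun x' => F x' y) = fun x' : Fin 3 → ℝ =>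
      (1/2) * ((x' 0 * x' 0 + x' 1 * x' 1 + x' 2 * x' 2) * enorm3 y ^ 2
        - (x' 0 * y 0 + x' 1 * y 1 + x' 2 * y 2) * (x' 0 * y 0 + x' 1 * y 1 + x' 2 * y 2)
        + 2 * μ * Real.sqrt (x' 0 * x' 0 + x' 1 * x' 1 + x' 2 * x' 2)) := by
    funext x'
    have hnn : (0:ℝ) ≤ dot x' x' :=
      Finset.sum_nonneg fun i _ => mul_self_nonneg (x' i)
    have h1 : enorm3 x' ^ 2 = dot x' x' := Real.sq_sqrt hnn
    simp only [hF]
    rw [h1]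
    simp only [enorm3, dot, Fin.sum_univ_three]
    ring
  have h0 : ∀ i : Fin 3, HasFDerivAt (fun x' : Fin 3 → ℝ => x' i)
      (ContinuousLinearMap.proj (R := ℝ) (φ := fun _ : Fin 3 => ℝ) i) x :=
    fun i => by exact (ContinuousLinearMap.proj (R := ℝ) (φ := fun _ : Fin 3 => ℝ) i).hasFDerivAt
  have hqd := (((h0 0).mul (h0 0)).add ((h0 1).mul (h0 1))).add ((h0 2).mul (h0 2))
  have hpd := (((h0 0).mul_const (y 0)).add ((h0 1).mul_const (y 1))).add
      ((h0 2).mul_const (y 2))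
  have hsd := (Real.hasDerivAt_sqrt hqne).comp_hasFDerivAt x hqd
  simp only [Function.comp_def] at hsd
  have hG := (((hqd.mul_const (enorm3 y ^ 2)).sub (hpd.mul hpd)).add
      (hsd.const_mul (2*μ))).const_mul (1/2)
  rw [hfun, HasFDerivAt.fderiv (f := fun x' : Fin 3 → ℝ =>
      (1/2) * ((x' 0 * x' 0 + x' 1 * x' 1 + x' 2 * x' 2) * enorm3 y ^ 2
        - (x' 0 * y 0 + x' 1 * y 1 + x' 2 * y 2) * (x' 0 * y 0 + x' 1 * y 1 + x' 2 * y 2)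
        + 2 * μ * Real.sqrt (x' 0 * x' 0 + x' 1 * x' 1 + x' 2 * x' 2))) hG]
  have hs : enorm3 x = Real.sqrt (x 0 * x 0 + x 1 * x 1 + x 2 * x 2) := by
    simp [enorm3, dot, Fin.sum_univ_three]
  have hspos : 0 < Real.sqrt (x 0 * x 0 + x 1 * x 1 + x 2 * x 2) := Real.sqrt_pos.mpr hqpos
  have hssq : Real.sqrt (x 0 * x 0 + x 1 * x 1 + x 2 * x 2) ^ 2
      = x 0 * x 0 + x 1 * x 1 + x 2 * x 2 := Real.sq_sqrt hqpos.le
  have hy : enorm3 y ^ 2 = y 0 * y 0 + y 1 * y 1 + y 2 * y 2 := by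
    rw [show y 0 * y 0 + y 1 * y 1 + y 2 * y 2 = dot y y by simp [dot, Fin.sum_univ_three]]
    exact Real.sq_sqrt (Finset.sum_nonneg fun i _ => mul_self_nonneg (y i))
  fin_cases j <;>
    simp only [ContinuousLinearMap.coe_smul', Pi.smul_apply, ContinuousLinearMap.add_apply,
      ContinuousLinearMap.sub_apply, ContinuousLinearMap.smul_apply,
      ContinuousLinearMap.proj_apply, smul_eq_mul, Pi.single_apply] <;>
    simp [cross, hs, hy] <;> field_simp <;> ring
end

section
/- Let a₁ < a₂ < … < a_N be real constants and A, B ∈ ℝ. Define on ℝ^{2N} the functions f_ν(x,y) = (A x_ν + B y_ν)² + Σ_{j≠ν} (x_ν y_j − x_j y_ν)²/(a_ν − a_j) for ν = 1,…,N. Then the f_ν are pairwise in involution with respect to the canonical Poisson bracket: {f_ν, f_μ} = 0 for all ν, μ. -/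
open Finset

private noncomputable def cm1 (N : ℕ) (k : Fin N) : ((Fin N → ℝ) × (Fin N → ℝ)) →L[ℝ] ℝ :=
  (ContinuousLinearMap.proj k).comp (ContinuousLinearMap.fst ℝ (Fin N → ℝ) (Fin N → ℝ))

private noncomputable def cm2 (N : ℕ) (k : Fin N) : ((Fin N → ℝ) × (Fin N → ℝ)) →L[ℝ] ℝ :=
  (ContinuousLinearMap.proj k).comp (ContinuousLinearMap.snd ℝ (Fin N → ℝ) (Fin N → ℝ))

@[simp] private lemma cm1_apply (N k v) : cm1 N k v = v.1 k := rfl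
@[simp] private lemma cm2_apply (N k v) : cm2 N k v = v.2 k := rfl

private lemma fderiv_eval (N : ℕ) (a : Fin N → ℝ) (A B : ℝ) (ν : Fin N)
    (p v : (Fin N → ℝ) × (Fin N → ℝ)) :
    fderiv ℝ (fun p : (Fin N → ℝ) × (Fin N → ℝ) => (A * p.1 ν + B * p.2 ν) ^ 2
      + ∑ j, if j ≠ ν then (p.1 ν * p.2 j - p.1 j * p.2 ν) ^ 2 / (a ν - a j) else 0) p v
    = 2*(A*p.1 ν+B*p.2 ν)*(A*v.1 ν+B*v.2 ν)
      + ∑ j, if j ≠ ν then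
          2*(p.1 ν*p.2 j - p.1 j*p.2 ν)*(v.1 ν*p.2 j + p.1 ν*v.2 j - v.1 j*p.2 ν - p.1 j*v.2 ν)
            /(a ν - a j) else 0 := by
  have hx : ∀ k, HasFDerivAt (fun q : (Fin N → ℝ) × (Fin N → ℝ) => q.1 k) (cm1 N k) p :=
    fun k => (cm1 N k).hasFDerivAt
  have hy : ∀ k, HasFDerivAt (fun q : (Fin N → ℝ) × (Fin N → ℝ) => q.2 k) (cm2 N k) p :=
    fun k => (cm2 N k).hasFDerivAt
  have h1 : HasFDerivAt (fun q : (Fin N → ℝ) × (Fin N → ℝ) => A*q.1 ν + B*q.2 ν)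
      (A • cm1 N ν + B • cm2 N ν) p := ((hx ν).const_mul A).add ((hy ν).const_mul B)
  have hsq := h1.fun_mul h1
  have hw : ∀ j, HasFDerivAt (fun q : (Fin N → ℝ) × (Fin N → ℝ) => q.1 ν*q.2 j - q.1 j*q.2 ν)
      ((p.1 ν • cm2 N j + p.2 j • cm1 N ν) - (p.1 j • cm2 N ν + p.2 ν • cm1 N j)) p :=
    fun j => ((hx ν).mul (hy j)).sub ((hx j).mul (hy ν))
  have hterm : ∀ j : Fin N, HasFDerivAt
      (fun q : (Fin N → ℝ) × (Fin N → ℝ) => if j ≠ ν then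
        (a ν - a j)⁻¹ * ((q.1 ν*q.2 j - q.1 j*q.2 ν) * (q.1 ν*q.2 j - q.1 j*q.2 ν)) else 0)
      (if j ≠ ν then
        (a ν - a j)⁻¹ • ((p.1 ν*p.2 j - p.1 j*p.2 ν) •
            ((p.1 ν • cm2 N j + p.2 j • cm1 N ν) - (p.1 j • cm2 N ν + p.2 ν • cm1 N j))
          + (p.1 ν*p.2 j - p.1 j*p.2 ν) •
            ((p.1 ν • cm2 N j + p.2 j • cm1 N ν) - (p.1 j • cm2 N ν + p.2 ν • cm1 N j)))
        else 0) p := by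
    intro j
    by_cases h : j ≠ ν
    · simp only [if_pos h]
      exact ((hw j).mul (hw j)).const_mul _
    · simp only [if_neg h]
      exact hasFDerivAt_const 0 p
  have hfe : (fun p : (Fin N → ℝ) × (Fin N → ℝ) => (A * p.1 ν + B * p.2 ν) ^ 2
      + ∑ j, if j ≠ ν then (p.1 ν * p.2 j - p.1 j * p.2 ν) ^ 2 / (a ν - a j) else 0)
      = fun q : (Fin N → ℝ) × (Fin N → ℝ) =>
        (A*q.1 ν + B*q.2 ν) * (A*q.1 ν + B*q.2 ν)
        + ∑ j, if j ≠ ν then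
            (a ν - a j)⁻¹ * ((q.1 ν*q.2 j - q.1 j*q.2 ν) * (q.1 ν*q.2 j - q.1 j*q.2 ν)) else 0 := by
    funext q
    simp only [pow_two, div_eq_inv_mul]
  rw [hfe]
  have hD := hsq.fun_add (HasFDerivAt.fun_sum (u := Finset.univ) (fun j _ => hterm j))
  rw [hD.fderiv]
  simp only [ContinuousLinearMap.add_apply, ContinuousLinearMap.coe_sum', Finset.sum_apply,
    ContinuousLinearMap.smul_apply, ContinuousLinearMap.sub_apply, cm1_apply, cm2_apply,
    smul_eq_mul, apply_ite (fun L : ((Fin N → ℝ) × (Fin N → ℝ)) →L[ℝ] ℝ => L v),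
    ContinuousLinearMap.zero_apply]
  congr 1
  · ring
  · refine Finset.sum_congr rfl fun j _ => ?_
    split_ifs with h
    · field_simp
      ring
    · rfl

noncomputable def X (N : ℕ) (a : Fin N → ℝ) (A B : ℝ) (p : (Fin N → ℝ) × (Fin N → ℝ))
    (ν k : Fin N) : ℝ :=
  if k = ν then 2*A*(A*p.1 ν+B*p.2 ν)
      + ∑ j, (if j ≠ ν then 2*(p.1 ν*p.2 j - p.1 j*p.2 ν)*p.2 j/(a ν - a j) else 0)
  else -(2*(p.1 ν*p.2 k - p.1 k*p.2 ν)*p.2 ν/(a ν - a k))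

noncomputable def Y (N : ℕ) (a : Fin N → ℝ) (A B : ℝ) (p : (Fin N → ℝ) × (Fin N → ℝ))
    (ν k : Fin N) : ℝ :=
  if k = ν then 2*B*(A*p.1 ν+B*p.2 ν)
      - ∑ j, (if j ≠ ν then 2*(p.1 ν*p.2 j - p.1 j*p.2 ν)*p.1 j/(a ν - a j) else 0)
  else 2*(p.1 ν*p.2 k - p.1 k*p.2 ν)*p.1 ν/(a ν - a k)

lemma hgx (N : ℕ) (a : Fin N → ℝ) (A B : ℝ) (ν k : Fin N) (p : (Fin N → ℝ) × (Fin N → ℝ)) :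
    fderiv ℝ (fun p : (Fin N → ℝ) × (Fin N → ℝ) => (A * p.1 ν + B * p.2 ν) ^ 2
      + ∑ j, if j ≠ ν then (p.1 ν * p.2 j - p.1 j * p.2 ν) ^ 2 / (a ν - a j) else 0) p
      (Pi.single k 1, 0)
    = X N a A B p ν k := by
  rw [fderiv_eval]
  simp only [Pi.single_apply, Pi.zero_apply, X]
  by_cases hk : k = ν
  · subst hk
    rw [if_pos rfl, if_pos rfl]
    simp only [mul_one, mul_zero, add_zero, sub_zero]
    congr 1
    · ring
    apply Finset.sum_congr rfl
    intro j _
    split_ifs with h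
    · ring
    · rfl
  · rw [if_neg (fun h => hk h.symm), if_neg hk]
    rw [Finset.sum_eq_single_of_mem k (Finset.mem_univ k)]
    · rw [if_pos (fun h => hk h), if_pos rfl]
      ring
    · intro j _ hjk
      rw [if_neg hjk]
      split_ifs with h
      · ring
      · rfl

lemma hgy (N : ℕ) (a : Fin N → ℝ) (A B : ℝ) (ν k : Fin N) (p : (Fin N → ℝ) × (Fin N → ℝ)) :
    fderiv ℝ (fun p : (Fin N → ℝ) × (Fin N → ℝ) => (A * p.1 ν + B * p.2 ν) ^ 2
      + ∑ j, if j ≠ ν then (p.1 ν * p.2 j - p.1 j * p.2 ν) ^ 2 / (a ν - a j) else 0) p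
      (0, Pi.single k 1)
    = Y N a A B p ν k := by
  rw [fderiv_eval]
  simp only [Pi.single_apply, Pi.zero_apply, Y]
  by_cases hk : k = ν
  · subst hk
    rw [if_pos rfl, if_pos rfl]
    simp only [mul_one, mul_zero, add_zero, zero_sub, zero_mul, zero_add]
    rw [sub_eq_add_neg, ← Finset.sum_neg_distrib]
    congr 1
    · ring
    apply Finset.sum_congr rfl
    intro j _
    split_ifs with h
    · ring
    · simp
  · rw [if_neg (fun h => hk h.symm), if_neg hk]
    rw [Finset.sum_eq_single_of_mem k (Finset.mem_univ k)]
    · rw [if_pos (fun h => hk h), if_pos rfl]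
      ring
    · intro j _ hjk
      rw [if_neg hjk]
      split_ifs with h
      · ring
      · rfl

lemma key (N : ℕ) (a : Fin N → ℝ) (ha : ∀ i j : Fin N, i ≠ j → a i ≠ a j)
    (A B : ℝ) (p : (Fin N → ℝ) × (Fin N → ℝ)) (ν μ : Fin N) (hνμ : ν ≠ μ) :
    ∑ k, (X N a A B p ν k * Y N a A B p μ k - Y N a A B p ν k * X N a A B p μ k) = 0 := by
  have hμν : μ ∈ (univ : Finset (Fin N)).erase ν := mem_erase.2 ⟨Ne.symm hνμ, mem_univ μ⟩
  have hab : a ν - a μ ≠ 0 := sub_ne_zero.2 (ha ν μ hνμ)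
  have hba : a μ - a ν ≠ 0 := sub_ne_zero.2 (ha μ ν hνμ.symm)
  set E : Finset (Fin N) := ((univ : Finset (Fin N)).erase ν).erase μ with hE
  -- split off k = ν and k = μ
  rw [← Finset.add_sum_erase _ _ (mem_univ ν), ← Finset.add_sum_erase _ _ hμν]
  -- helper to split the inner sums
  have hsum : ∀ (t : Fin N → ℝ) (σ τ : Fin N), σ ≠ τ →
      (∑ j, if j ≠ σ then t j else 0)
        = t τ + ∑ j ∈ ((univ : Finset (Fin N)).erase σ).erase τ, t j := by
    intro t σ τ hστ
    rw [← Finset.sum_filter, Finset.filter_ne' univ σ,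
      ← Finset.add_sum_erase _ _ (mem_erase.2 ⟨Ne.symm hστ, mem_univ τ⟩)]
  -- rewrite the E-part of the main sum in explicit form
  have hEterm : ∑ k ∈ E, (X N a A B p ν k * Y N a A B p μ k
        - Y N a A B p ν k * X N a A B p μ k)
      = ∑ k ∈ E, ((-(2*(p.1 ν*p.2 k - p.1 k*p.2 ν)*p.2 ν/(a ν - a k)))
            * (2*(p.1 μ*p.2 k - p.1 k*p.2 μ)*p.1 μ/(a μ - a k))
          - (2*(p.1 ν*p.2 k - p.1 k*p.2 ν)*p.1 ν/(a ν - a k))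
            * (-(2*(p.1 μ*p.2 k - p.1 k*p.2 μ)*p.2 μ/(a μ - a k)))) := by
    apply Finset.sum_congr rfl
    intro k hk
    have hkμ : k ≠ μ := (mem_erase.1 hk).1
    have hkν : k ≠ ν := (mem_erase.1 (mem_erase.1 hk).2).1
    rw [X, Y, X, Y, if_neg hkν, if_neg hkν, if_neg hkμ, if_neg hkμ]
  rw [hEterm]
  -- explicit values of X, Y at the special points
  have hEcomm : ((univ : Finset (Fin N)).erase μ).erase ν = E := by
    ext k; simp only [hE, mem_erase, mem_univ, and_true]; tauto
  simp only [X, Y, if_pos rfl, if_true, if_neg hνμ, if_neg (Ne.symm hνμ)]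
  rw [hsum _ ν μ hνμ, hsum _ ν μ hνμ, hsum _ μ ν (Ne.symm hνμ), hsum _ μ ν (Ne.symm hνμ),
    hEcomm]
  set S1 := ∑ j ∈ E, 2*(p.1 ν*p.2 j - p.1 j*p.2 ν)*p.2 j/(a ν - a j) with hS1
  set S2 := ∑ j ∈ E, 2*(p.1 ν*p.2 j - p.1 j*p.2 ν)*p.1 j/(a ν - a j) with hS2
  set S3 := ∑ j ∈ E, 2*(p.1 μ*p.2 j - p.1 j*p.2 μ)*p.2 j/(a μ - a j) with hS3
  set S4 := ∑ j ∈ E, 2*(p.1 μ*p.2 j - p.1 j*p.2 μ)*p.1 j/(a μ - a j) with hS4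
  -- combine everything into a single sum over E plus a closed part
  have hcomb : ∀ k ∈ E,
      (-(2*(p.1 ν*p.2 k - p.1 k*p.2 ν)*p.2 ν/(a ν - a k)))
          * (2*(p.1 μ*p.2 k - p.1 k*p.2 μ)*p.1 μ/(a μ - a k))
        - (2*(p.1 ν*p.2 k - p.1 k*p.2 ν)*p.1 ν/(a ν - a k))
          * (-(2*(p.1 μ*p.2 k - p.1 k*p.2 μ)*p.2 μ/(a μ - a k)))
      = -((2*(p.1 μ*p.2 ν - p.1 ν*p.2 μ)*p.1 μ/(a μ - a ν))
            * (2*(p.1 ν*p.2 k - p.1 k*p.2 ν)*p.2 k/(a ν - a k)))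
        - ((-(2*(p.1 μ*p.2 ν - p.1 ν*p.2 μ)*p.2 μ/(a μ - a ν)))
            * (2*(p.1 ν*p.2 k - p.1 k*p.2 ν)*p.1 k/(a ν - a k)))
        - ((-(2*(p.1 ν*p.2 μ - p.1 μ*p.2 ν)*p.1 ν/(a ν - a μ)))
            * (2*(p.1 μ*p.2 k - p.1 k*p.2 μ)*p.2 k/(a μ - a k)))
        - ((2*(p.1 ν*p.2 μ - p.1 μ*p.2 ν)*p.2 ν/(a ν - a μ))
            * (2*(p.1 μ*p.2 k - p.1 k*p.2 μ)*p.1 k/(a μ - a k))) := by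
    intro k hk
    have hkμ : k ≠ μ := (mem_erase.1 hk).1
    have hkν : k ≠ ν := (mem_erase.1 (mem_erase.1 hk).2).1
    have h1 : a ν - a k ≠ 0 := sub_ne_zero.2 (ha ν k hkν.symm)
    have h2 : a μ - a k ≠ 0 := sub_ne_zero.2 (ha μ k hkμ.symm)
    field_simp [hab, hba, h1, h2]
    ring
  rw [Finset.sum_congr rfl hcomb]
  simp only [Finset.sum_sub_distrib, Finset.sum_neg_distrib, ← Finset.mul_sum, ← hS1, ← hS2, ← hS3, ← hS4]
  field_simp [hab, hba]
  ring


/-- Canonical Poisson bracket on ℝ^{2n}. -/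
noncomputable def pb {n : ℕ} (f g : (Fin n → ℝ) × (Fin n → ℝ) → ℝ)
    (p : (Fin n → ℝ) × (Fin n → ℝ)) : ℝ :=
  ∑ j, (fderiv ℝ f p (Pi.single j 1, 0) * fderiv ℝ g p (0, Pi.single j 1)
      - fderiv ℝ f p (0, Pi.single j 1) * fderiv ℝ g p (Pi.single j 1, 0))

theorem main_family_in_involution
    (N : ℕ) (a : Fin N → ℝ) (ha : StrictMono a) (A B : ℝ)
    (f : Fin N → (Fin N → ℝ) × (Fin N → ℝ) → ℝ)
    (hf : ∀ ν, f ν = fun p => (A * p.1 ν + B * p.2 ν) ^ 2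
      + ∑ j, if j ≠ ν then (p.1 ν * p.2 j - p.1 j * p.2 ν) ^ 2 / (a ν - a j) else 0) :
    ∀ ν μ p, pb (f ν) (f μ) p = 0 := by
  intro ν μ p
  by_cases h : ν = μ
  · subst h
    unfold pb
    apply Finset.sum_eq_zero
    intro j _
    ring
  · unfold pb
    simp only [hf, hgx, hgy]
    exact key N a (fun i j hij => ha.injective.ne hij) A B p ν μ h
end
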